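/- The bounded operator T on L²(𝕋) defined on the orthonormal basis {zⁿ : n ∈ ℤ} by T zⁿ = z^{2n+1} does not belong to the C*-algebra 𝔑_{L∞}; in particular 𝔑_{L∞} is a proper C*-subalgebra of B(L²(𝕋)). (Indeed T*T − TT* is the orthogonal projection onto the closed span of {z^{2n} : n ∈ ℤ}, and lim_{r→1⁻} ⟨(T*T − TT*) k_{rξ}, k_{rξ}⟩ = 1/2 for every ξ ∈ 𝕋.) -/

import Mathlib

open MeasureTheory AddCircle Filter Topology
open scoped ENNReal

noncomputable section

namespace GSIO

instance : Fact (0 < 2 * Real.pi) := ⟨by positivity⟩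

/-- The unit circle, realized as `ℝ / 2πℤ`. -/
abbrev 𝕋 : Type := AddCircle (2 * Real.pi)

/-- Normalized Lebesgue (Haar) measure on the circle. -/
abbrev μ : Measure 𝕋 := @haarAddCircle (2 * Real.pi) _

/-- `L²(𝕋)`. -/
abbrev L2 : Type := Lp ℂ 2 μ

/-- The embedding `𝕋 ⊆ ℂ`, `t ↦ e^{it}`. -/
def e : C(𝕋, ℂ) := ⟨fun t => (toCircle t : ℂ), continuous_induced_dom.comp continuous_toCircle⟩

/-- The Hardy space `H²`: the closed linear span of `{zⁿ : n ≥ 0}` in `L²`. -/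
def H2 : Submodule ℂ L2 :=
  (Submodule.span ℂ (Set.range fun n : ℕ => (fourierLp 2 (n : ℤ) : L2))).topologicalClosure

instance : CompleteSpace H2 :=
  (Submodule.isClosed_topologicalClosure _).isComplete.completeSpace_coe

/-- The Riesz projection `P₊ : L² → H² ⊆ L²`. -/
def Pplus : L2 →L[ℂ] L2 := (H2.subtypeL).comp (H2.orthogonalProjectionOnto)

/-- `P₋ = I - P₊`. -/
def Pminus : L2 →L[ℂ] L2 := ContinuousLinearMap.id ℂ L2 - Pplus

/-- The GSIO defining relation `R x = P₊(f·P₊x) + P₋(g·P₊x) + P₊(φ·P₋x) + P₋(ψ·P₋x)`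
at a point `x ∈ L²` (including the requirement that the four products lie in `L²`). -/
def gsioEq (R : L2 → L2) (f g φ ψ : 𝕋 → ℂ) (x : L2) : Prop :=
  ∃ (h₁ : MemLp (f * ⇑(Pplus x)) 2 μ) (h₂ : MemLp (g * ⇑(Pplus x)) 2 μ)
    (h₃ : MemLp (φ * ⇑(Pminus x)) 2 μ) (h₄ : MemLp (ψ * ⇑(Pminus x)) 2 μ),
    R x = Pplus (h₁.toLp _) + Pminus (h₂.toLp _) + Pplus (h₃.toLp _) + Pminus (h₄.toLp _)

/-- `R` is the (bounded) generalized singular integral operator with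
symbol matrix `(f, φ; g, ψ)`. -/
def IsGSIO (R : L2 →L[ℂ] L2) (f g φ ψ : 𝕋 → ℂ) : Prop := ∀ x : L2, gsioEq (⇑R) f g φ ψ x

/-- Normalized reproducing kernel `k_z` of `H²`, as an element of `L²`. -/
def kern (z : ℂ) : L2 :=
  (Real.sqrt (1 - ‖z‖ ^ 2) : ℂ) • ∑' n : ℕ, (starRingEnd ℂ z) ^ n • (fourierLp 2 (n : ℤ) : L2)

/-- The unit vector `z̄k̄_z : w ↦ w̄ ⬝ conj (k_z w)` of `(H²)^⊥`, as an element of `L²`. -/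
def kbar (z : ℂ) : L2 :=
  (Real.sqrt (1 - ‖z‖ ^ 2) : ℂ) • ∑' n : ℕ, z ^ n • (fourierLp 2 (-(n + 1) : ℤ) : L2)

/-- `L∞(𝕋)`: essentially bounded (a.e. strongly measurable) functions. -/
def Linf : Set (𝕋 → ℂ) := {h | MemLp h ∞ μ}

/-- `C(𝕋)`: functions (a.e. equal to) continuous functions. -/
def CT : Set (𝕋 → ℂ) := {h | ∃ c : 𝕋 → ℂ, Continuous c ∧ h =ᵐ[μ] c}

/-- `H∞ = H² ∩ L∞`. -/
def Hinf : Set (𝕋 → ℂ) := {h | ∃ h2 : MemLp h 2 μ, h2.toLp h ∈ H2 ∧ MemLp h ∞ μ}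

/-- `H∞ + C(𝕋)`. -/
def HinfC : Set (𝕋 → ℂ) := {h | ∃ a ∈ Hinf, ∃ c ∈ CT, h =ᵐ[μ] a + c}

/-- The quasicontinuous functions `QC = (H∞ + C) ∩ conj (H∞ + C)`. -/
def QC : Set (𝕋 → ℂ) := {h | h ∈ HinfC ∧ star h ∈ HinfC}

/-- The set of GSIOs with all four symbols in `S`. -/
def gsioSet (S : Set (𝕋 → ℂ)) : Set (L2 →L[ℂ] L2) :=
  {R | ∃ f g φ ψ : 𝕋 → ℂ, f ∈ S ∧ g ∈ S ∧ φ ∈ S ∧ ψ ∈ S ∧ IsGSIO R f g φ ψ}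

/-- The C*-algebra `𝔑_S` generated by the GSIOs with symbols in `S`. -/
def NAlg (S : Set (𝕋 → ℂ)) : StarSubalgebra ℂ (L2 →L[ℂ] L2) :=
  (StarAlgebra.adjoin ℂ (gsioSet S)).topologicalClosure

/-- Generators `R_{H₁} R_{H₂} - R_K` of the semicommutator ideal. -/
def semiGen (S : Set (𝕋 → ℂ)) : Set (L2 →L[ℂ] L2) :=
  {T | ∃ f₁ g₁ φ₁ ψ₁ f₂ g₂ φ₂ ψ₂ g φ : 𝕋 → ℂ,
      f₁ ∈ S ∧ g₁ ∈ S ∧ φ₁ ∈ S ∧ ψ₁ ∈ S ∧ f₂ ∈ S ∧ g₂ ∈ S ∧ φ₂ ∈ S ∧ ψ₂ ∈ S ∧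
      g ∈ S ∧ φ ∈ S ∧
      ∃ R₁ R₂ RK : L2 →L[ℂ] L2, IsGSIO R₁ f₁ g₁ φ₁ ψ₁ ∧ IsGSIO R₂ f₂ g₂ φ₂ ψ₂ ∧
        IsGSIO RK (f₁ * f₂) g φ (ψ₁ * ψ₂) ∧ T = R₁ * R₂ - RK}

/-- The closed two-sided ideal `𝔖𝔑_S` of `𝔑_S` generated by the semicommutators. -/
def SemiIdeal (S : Set (𝕋 → ℂ)) : Set (L2 →L[ℂ] L2) :=
  closure (AddSubgroup.closure
    {T | ∃ a b t : L2 →L[ℂ] L2, a ∈ NAlg S ∧ b ∈ NAlg S ∧ t ∈ semiGen S ∧ T = a * t * b} :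
      Set (L2 →L[ℂ] L2))

/-- Fredholm: closed range and finite-dimensional kernel and cokernel. -/
def IsFredholm (T : L2 →L[ℂ] L2) : Prop :=
  FiniteDimensional ℂ (LinearMap.ker (T : L2 →ₗ[ℂ] L2)) ∧
  FiniteDimensional ℂ (L2 ⧸ LinearMap.range (T : L2 →ₗ[ℂ] L2)) ∧
  IsClosed (LinearMap.range (T : L2 →ₗ[ℂ] L2) : Set L2)

/-- Fredholm index `ind T = dim ker T - dim ker T*`. -/
def ind (T : L2 →L[ℂ] L2) : ℤ :=
  (Module.finrank ℂ (LinearMap.ker (T : L2 →ₗ[ℂ] L2)) : ℤ) -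
    (Module.finrank ℂ (LinearMap.ker (ContinuousLinearMap.adjoint T : L2 →ₗ[ℂ] L2)) : ℤ)

/-- Essential spectrum (spectrum in the Calkin algebra, via Atkinson's theorem). -/
def essSpectrum (T : L2 →L[ℂ] L2) : Set ℂ := {z | ¬ IsFredholm (T - z • 1)}

/-- Essential norm: distance to the compact operators. -/
def essNorm (T : L2 →L[ℂ] L2) : ℝ :=
  sInf ((fun K => ‖T + K‖) '' {K : L2 →L[ℂ] L2 | IsCompactOperator K})

/-- Essential range of a measurable function. -/
def essRange (f : 𝕋 → ℂ) : Set ℂ := {c | ∀ ε > 0, μ {t | dist (f t) c < ε} ≠ 0}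

/-- `a` has winding number `w` about the origin, via a continuous argument lift. -/
def HasWindingNumber (a : C(𝕋, ℂ)) (w : ℤ) : Prop :=
  ∃ θ : ℝ → ℝ, ContinuousOn θ (Set.Icc 0 (2 * Real.pi)) ∧
    (∀ t ∈ Set.Icc 0 (2 * Real.pi),
      a (t : 𝕋) = (‖a (t : 𝕋)‖ : ℂ) * Complex.exp (θ t * Complex.I)) ∧
    θ (2 * Real.pi) - θ 0 = 2 * Real.pi * w

/-- The constant function `1` in `L²`. -/
def one2 : L2 := MemLp.toLp (fun _ => (1 : ℂ)) (memLp_const 1)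

/-- The rank-one operator `1 ⊗ 1 : x ↦ ⟨x,1⟩·1`. -/
def oneProj : L2 →L[ℂ] L2 := (innerSL ℂ one2).smulRight one2

/-- The Hilbert transform `ℍ = P₊ - P₋ - 1⊗1`. -/
def hilbertT : L2 →L[ℂ] L2 := Pplus - Pminus - oneProj

/-- `BMO(𝕋) = L∞ + ℍ L∞`, as a subset of `L²`. -/
def BMO2 : Set L2 := {x | ∃ a b : L2, ⇑a ∈ Linf ∧ ⇑b ∈ Linf ∧ x = a + hilbertT b}

/-- `⋂_{p ≥ 1} L^p(𝕋)`. -/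
def Lfin : Set (𝕋 → ℂ) := {h | ∀ p : ℝ, 1 ≤ p → MemLp h (ENNReal.ofReal p) μ}

/-- The GSIO relation for a map defined on functions (rather than on `L²`). -/
def gsioEqF (R : (𝕋 → ℂ) → (𝕋 → ℂ)) (f g φ ψ : 𝕋 → ℂ) (x : 𝕋 → ℂ) : Prop :=
  ∃ (hx : MemLp x 2 μ)
    (h₁ : MemLp (f * ⇑(Pplus (hx.toLp x))) 2 μ) (h₂ : MemLp (g * ⇑(Pplus (hx.toLp x))) 2 μ)
    (h₃ : MemLp (φ * ⇑(Pminus (hx.toLp x))) 2 μ) (h₄ : MemLp (ψ * ⇑(Pminus (hx.toLp x))) 2 μ),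
    R x =ᵐ[μ] ⇑(Pplus (h₁.toLp _) + Pminus (h₂.toLp _) + Pplus (h₃.toLp _) + Pminus (h₄.toLp _))

/-- Distance in `L∞` from a function to `H∞`. -/
def distHinfF (a : 𝕋 → ℂ) : ℝ :=
  sInf {r : ℝ | ∃ h ∈ Hinf, r = (eLpNorm (a - h) ∞ μ).toReal}

end GSIO

namespace GSIO

/-- The radial-limit function of `T` along the reproducing kernels `k_{rξ}` is `f`:
`lim_{r→1⁻} ⟨T k_{rξ}, k_{rξ}⟩ = f ξ` for a.e. `ξ` (inner products in the Mathlib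
convention, conjugate-linear in the first variable). -/
def symbPlus (T : L2 → L2) (f : 𝕋 → ℂ) : Prop :=
  ∀ᵐ ξ ∂μ, Tendsto
    (fun r : ℝ => (inner ℂ (kern ((r : ℂ) * e ξ)) (T (kern ((r : ℂ) * e ξ))) : ℂ))
    (𝓝[<] (1 : ℝ)) (𝓝 (f ξ))

/-- The radial-limit function of `T` along the vectors `z̄k̄_{rξ}` is `ψ`:
`lim_{r→1⁻} ⟨T z̄k̄_{rξ}, z̄k̄_{rξ}⟩ = ψ ξ` for a.e. `ξ`. -/
def symbMinus (T : L2 → L2) (ψ : 𝕋 → ℂ) : Prop :=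
  ∀ᵐ ξ ∂μ, Tendsto
    (fun r : ℝ => (inner ℂ (kbar ((r : ℂ) * e ξ)) (T (kbar ((r : ℂ) * e ξ))) : ℂ))
    (𝓝[<] (1 : ℝ)) (𝓝 (ψ ξ))

/-- `ρ(T) = (f, ψ)`: the pair of radial-limit symbol functions of `T`, in `L∞ ⊕ L∞`. -/
def HasSymbol (T : L2 →L[ℂ] L2) (f ψ : 𝕋 → ℂ) : Prop :=
  f ∈ Linf ∧ ψ ∈ Linf ∧ symbPlus (⇑T) f ∧ symbMinus (⇑T) ψ

end GSIO

/-!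
Let `W` be the bilateral shift, multiplication by `z`. Multiplication operators commute with `W`,
while `W⁻ⁿ P₊ Wⁿ`, the projection onto the closed span of `{zᵏ : k ≥ -n}`, tends strongly to the
identity. The operators `A` for which `W⁻ⁿ A Wⁿ` converges strongly form a norm-closed algebra
containing `P₊` and the commutant of `W`. Both are closed under adjoints, and every GSIO with `L∞`
symbols is a polynomial in `P₊` and multiplication operators, so this algebra contains `𝔑_{L∞}`.
For the operator `T`, however, `W⁻ⁿ T Wⁿ 1 = zⁿ⁺¹` does not converge. Such a `T` exists:
`x ↦ z · x(z²)`.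
-/

theorem Equicontinuous.isClosed_setOf_cauchySeq {ι X α : Type*} [TopologicalSpace X]
    [PseudoMetricSpace α] [Nonempty ι] [SemilatticeSup ι] {F : ι → X → α}
    (hF : Equicontinuous F) : IsClosed {x | CauchySeq (F · x)} := by
  refine isClosed_of_closure_subset fun x hx => Metric.cauchySeq_iff.2 fun ε hε => ?_
  have hnear : ∀ᶠ y in 𝓝 x, ∀ i, dist (F i x) (F i y) < ε / 3 :=
    Metric.equicontinuousAt_iff_right.1 (hF x) _ (by positivity)
  obtain ⟨y, hy, hxy⟩ := (mem_closure_iff_frequently.1 hx).and_eventually hnear |>.exists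
  obtain ⟨N, hN⟩ := Metric.cauchySeq_iff.1 hy _ (by positivity : 0 < ε / 3)
  refine ⟨N, fun m hm n hn => ?_⟩
  calc dist (F m x) (F n x) ≤ dist (F m x) (F m y) + dist (F m y) (F n y) + dist (F n y) (F n x) :=
        dist_triangle4 _ _ _ _
    _ < ε / 3 + ε / 3 + ε / 3 := by
        gcongr
        · exact hxy m
        · exact hN m hm n hn
        · rw [dist_comm]; exact hxy n
    _ = ε := by ring

theorem ContinuousLinearMap.tendsto_apply_of_dense_span {𝕜 E F ι : Type*}
    [NontriviallyNormedField 𝕜] [NormedAddCommGroup E] [NormedSpace 𝕜 E] [NormedAddCommGroup F]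
    [NormedSpace 𝕜 F] {l : Filter ι} {S : ι → E →L[𝕜] F} {T : E →L[𝕜] F} {C : ℝ}
    (hS : ∀ i, ‖S i‖ ≤ C) {s : Set E} (hs : (Submodule.span 𝕜 s).topologicalClosure = ⊤)
    (h : ∀ y ∈ s, Tendsto (fun i => S i y) l (𝓝 (T y))) (x : E) :
    Tendsto (fun i => S i x) l (𝓝 (T x)) := by
  let M : Submodule 𝕜 E :=
    { carrier := {y | Tendsto (fun i => S i y) l (𝓝 (T y))}
      add_mem' := fun hy hz => by simpa using hy.add hz
      zero_mem' := by simpa using tendsto_const_nhds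
      smul_mem' := fun c _ hy => by simpa using hy.const_smul c }
  have hM : IsClosed (M : Set E) :=
    Equicontinuous.isClosed_setOfPred_tendsto
      ((NormedSpace.equicontinuous_TFAE S).out 5 1 |>.1 (⟨C, hS⟩ : ∃ C, ∀ i, ‖S i‖ ≤ C))
      T.continuous
  have htop : ⊤ ≤ M := hs ▸ Submodule.topologicalClosure_minimal _ (Submodule.span_le.2 h) hM
  exact htop Submodule.mem_top

theorem Orthonormal.not_cauchySeq_comp {𝕜 E ι κ : Type*} [RCLike 𝕜] [NormedAddCommGroup E]
    [InnerProductSpace 𝕜 E] [Nonempty ι] [SemilatticeSup ι] [NoMaxOrder ι] {v : κ → E}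
    (hv : Orthonormal 𝕜 v) {s : ι → κ} (hs : Function.Injective s) : ¬ CauchySeq (v ∘ s) := by
  intro hc
  obtain ⟨N, hN⟩ := Metric.cauchySeq_iff.1 hc 1 one_pos
  obtain ⟨M, hM⟩ := exists_gt N
  have hdist := hN M hM.le N le_rfl
  have hsq : ‖v (s M) - v (s N)‖ ^ 2 = 2 := by
    rw [@norm_sub_sq 𝕜, hv.2 (hs.ne hM.ne'), hv.1, hv.1]
    norm_num
  rw [Function.comp_apply, Function.comp_apply, dist_eq_norm] at hdist
  nlinarith [norm_nonneg (v (s M) - v (s N))]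

section ConjCauchy

variable {𝕜 E ι : Type*} [NontriviallyNormedField 𝕜] [NormedAddCommGroup E] [NormedSpace 𝕜 E]

theorem LinearIsometryEquiv.norm_symm_apply_comp_le (e : E ≃ₗᵢ[𝕜] E) (A : E →L[𝕜] E) (x : E) :
    ‖e.symm (A (e x))‖ ≤ ‖A‖ * ‖x‖ := by
  simpa using A.le_opNorm (e x)

variable [CompleteSpace E] [Nonempty ι] [SemilatticeSup ι] (U : ι → E ≃ₗᵢ[𝕜] E)

def conjCauchySubalgebra : Subalgebra 𝕜 (E →L[𝕜] E) where
  carrier := {A | ∀ x, CauchySeq fun i => (U i).symm (A (U i x))}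
  mul_mem' {A B} hA hB x := by
    obtain ⟨y, hy⟩ := cauchySeq_tendsto_of_complete (hB x)
    have hsmall : Tendsto (fun i => (U i).symm (A (U i ((U i).symm (B (U i x)) - y)))) atTop
        (𝓝 0) := by
      refine squeeze_zero_norm (fun i => (U i).norm_symm_apply_comp_le A _) ?_
      simpa using (tendsto_iff_norm_sub_tendsto_zero.1 hy).const_mul ‖A‖
    simpa [Pi.add_def] using (hA y).add hsmall.cauchySeq
  one_mem' x := by simpa using cauchySeq_const x
  add_mem' hA hB x := by simpa [Pi.add_def] using (hA x).add (hB x)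
  zero_mem' _ := by simpa using cauchySeq_const (0 : E)
  algebraMap_mem' c x := by simpa [Algebra.algebraMap_eq_smul_one] using cauchySeq_const (c • x)

theorem isClosed_conjCauchySubalgebra : IsClosed (conjCauchySubalgebra U : Set (E →L[𝕜] E)) := by
  have hset : (conjCauchySubalgebra U : Set (E →L[𝕜] E)) =
      ⋂ x, {A | CauchySeq fun i => (U i).symm (A (U i x))} := by
    ext A; simp [conjCauchySubalgebra]
  rw [hset]
  refine isClosed_iInter fun x => Equicontinuous.isClosed_setOf_cauchySeq ?_
  refine (LipschitzWith.uniformEquicontinuous _ ‖x‖₊ fun i => ?_).equicontinuous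
  refine LipschitzWith.of_dist_le_mul fun A B => ?_
  simpa [dist_eq_norm, mul_comm] using (U i).norm_symm_apply_comp_le (A - B) x

theorem mem_conjCauchySubalgebra_of_commute {A : E →L[𝕜] E}
    (hA : ∀ i x, A (U i x) = U i (A x)) : A ∈ conjCauchySubalgebra U :=
  fun x => by simpa [hA] using cauchySeq_const (A x)

end ConjCauchy

namespace MeasureTheory.Lp

variable {α : Type*} [MeasurableSpace α] {ν : Measure α} {p : ℝ≥0∞} [Fact (1 ≤ p)]

def mulOp {g : α → ℂ} (hg : MemLp g ∞ ν) : Lp ℂ p ν →L[ℂ] Lp ℂ p ν :=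
  (ContinuousLinearMap.mul ℂ ℂ).holderL ν ∞ p p (hg.toLp g)

theorem mulOp_apply_ae {g : α → ℂ} (hg : MemLp g ∞ ν) (x : Lp ℂ p ν) :
    mulOp hg x =ᵐ[ν] g * x := by
  filter_upwards [(ContinuousLinearMap.mul ℂ ℂ).coeFn_holder (r := p) (hg.toLp g) x,
    hg.coeFn_toLp] with t ht hgt
  simp [mulOp, ht, hgt]

theorem _root_.MeasureTheory.MemLp.toLp_mul_eq_mulOp {g : α → ℂ} (hg : MemLp g ∞ ν)
    {x : Lp ℂ p ν} (hgx : MemLp (g * ⇑x) p ν) : hgx.toLp _ = mulOp hg x :=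
  Lp.ext (hgx.coeFn_toLp.trans (mulOp_apply_ae hg x).symm)

theorem mulOp_mulOp_comm {g h : α → ℂ} (hg : MemLp g ∞ ν) (hh : MemLp h ∞ ν) (x : Lp ℂ p ν) :
    mulOp hg (mulOp hh x) = mulOp hh (mulOp hg x) := by
  refine Lp.ext ?_
  filter_upwards [mulOp_apply_ae hg (mulOp hh x), mulOp_apply_ae hh x,
    mulOp_apply_ae hh (mulOp hg x), mulOp_apply_ae hg x] with t h₁ h₂ h₃ h₄
  simp only [h₁, h₂, h₃, h₄, Pi.mul_apply, mul_left_comm]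

theorem memLp_top_circle {u : α → Circle} (hu : AEStronglyMeasurable (fun t => (u t : ℂ)) ν) :
    MemLp (fun t => (u t : ℂ)) ∞ ν :=
  memLp_top_of_bound hu 1 (ae_of_all _ fun _ => (Circle.norm_coe _).le)

theorem aestronglyMeasurable_circle_inv {u : α → Circle}
    (hu : AEStronglyMeasurable (fun t => (u t : ℂ)) ν) :
    AEStronglyMeasurable (fun t => ((u⁻¹ t : Circle) : ℂ)) ν := by
  refine (Complex.continuous_conj.comp_aestronglyMeasurable hu).congr (ae_of_all _ fun t => ?_)
  exact (Circle.coe_inv_eq_conj (u t)).symm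

theorem mulOp_circle_inv_cancel {u v : α → Circle} (huv : ∀ t, u t * v t = 1)
    (hu : AEStronglyMeasurable (fun t => (u t : ℂ)) ν)
    (hv : AEStronglyMeasurable (fun t => (v t : ℂ)) ν) (x : Lp ℂ p ν) :
    mulOp (memLp_top_circle hu) (mulOp (memLp_top_circle hv) x) = x := by
  refine Lp.ext ?_
  filter_upwards [mulOp_apply_ae (memLp_top_circle hu) (mulOp (memLp_top_circle hv) x),
    mulOp_apply_ae (memLp_top_circle hv) x] with t h₁ h₂
  rw [h₁, Pi.mul_apply, h₂, Pi.mul_apply, ← mul_assoc, ← Circle.coe_mul, huv, Circle.coe_one,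
    one_mul]

theorem norm_mulOp_circle {u : α → Circle} (hu : AEStronglyMeasurable (fun t => (u t : ℂ)) ν)
    (x : Lp ℂ p ν) : ‖mulOp (memLp_top_circle hu) x‖ = ‖x‖ := by
  rw [Lp.norm_def, Lp.norm_def]
  congr 1
  refine eLpNorm_congr_norm_ae ?_
  filter_upwards [mulOp_apply_ae (memLp_top_circle hu) x] with t ht
  simp [ht, Circle.norm_coe]

def mulCircle (u : α → Circle) (hu : AEStronglyMeasurable (fun t => (u t : ℂ)) ν) :
    Lp ℂ p ν ≃ₗᵢ[ℂ] Lp ℂ p ν where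
  toLinearEquiv := .ofLinearMap (mulOp (memLp_top_circle hu)).toLinearMap
    (mulOp (memLp_top_circle (aestronglyMeasurable_circle_inv hu))).toLinearMap
    (LinearMap.ext <| mulOp_circle_inv_cancel (fun t => mul_inv_cancel (u t)) hu
      (aestronglyMeasurable_circle_inv hu))
    (LinearMap.ext <| mulOp_circle_inv_cancel (fun t => inv_mul_cancel (u t))
      (aestronglyMeasurable_circle_inv hu) hu)
  norm_map' := norm_mulOp_circle hu

theorem mulCircle_apply {u : α → Circle} (hu : AEStronglyMeasurable (fun t => (u t : ℂ)) ν)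
    (x : Lp ℂ p ν) : mulCircle u hu x = mulOp (memLp_top_circle hu) x :=
  rfl

theorem conjStarAlgEquiv_mulCircle_mulOp {u : α → Circle}
    (hu : AEStronglyMeasurable (fun t => (u t : ℂ)) ν) {g : α → ℂ} (hg : MemLp g ∞ ν) :
    (mulCircle u hu : Lp ℂ 2 ν ≃ₗᵢ[ℂ] Lp ℂ 2 ν).conjStarAlgEquiv (mulOp hg) = mulOp hg := by
  ext1 x
  rw [LinearIsometryEquiv.conjStarAlgEquiv_apply_apply, mulCircle_apply, mulOp_mulOp_comm,
    ← mulCircle_apply hu, LinearIsometryEquiv.apply_symm_apply]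

end MeasureTheory.Lp

namespace GSIO

theorem aestronglyMeasurable_toCircle_zsmul (n : ℤ) :
    AEStronglyMeasurable (fun t : 𝕋 => (toCircle (n • t) : ℂ)) μ :=
  (fourier n).continuous.aestronglyMeasurable

def shift (n : ℤ) : L2 ≃ₗᵢ[ℂ] L2 :=
  Lp.mulCircle (fun t => toCircle (n • t)) (aestronglyMeasurable_toCircle_zsmul n)

theorem shift_fourierLp (n k : ℤ) : shift n (fourierLp 2 k) = fourierLp 2 (n + k) := by
  rw [shift, Lp.mulCircle_apply]
  refine Lp.ext ?_
  filter_upwards [Lp.mulOp_apply_ae _ (fourierLp 2 k), coeFn_fourierLp 2 k,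
    coeFn_fourierLp 2 (n + k)] with t h₁ h₂ h₃
  rw [h₁, Pi.mul_apply, h₂, h₃, fourier_add]
  rfl

theorem shift_symm_fourierLp (n k : ℤ) : (shift n).symm (fourierLp 2 k) = fourierLp 2 (k - n) := by
  rw [LinearIsometryEquiv.symm_apply_eq, shift_fourierLp, add_sub_cancel]

theorem fourierLp_mem_H2 {k : ℤ} (hk : 0 ≤ k) : fourierLp 2 k ∈ H2 :=
  Submodule.le_topologicalClosure _ (Submodule.subset_span ⟨k.toNat, by simp [hk]⟩)

theorem Pplus_fourierLp {k : ℤ} (hk : 0 ≤ k) : Pplus (fourierLp 2 k) = fourierLp 2 k :=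
  Submodule.starProjection_eq_self_iff.2 (fourierLp_mem_H2 hk)

theorem tendsto_shift_conj_Pplus (x : L2) :
    Tendsto (fun n => (shift n).symm (Pplus (shift n x))) atTop (𝓝 x) := by
  let S n : L2 →L[ℂ] L2 := ((shift n).symm : L2 →L[ℂ] L2) ∘L Pplus ∘L (shift n : L2 →L[ℂ] L2)
  have hS n : ‖S n‖ ≤ ‖Pplus‖ :=
    (S n).opNorm_le_bound (norm_nonneg _) ((shift n).norm_symm_apply_comp_le Pplus)
  refine ContinuousLinearMap.tendsto_apply_of_dense_span (T := .id ℂ L2) hS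
    (span_fourierLp_closure_eq_top (by norm_num)) ?_ x
  rintro - ⟨k, rfl⟩
  refine tendsto_const_nhds.congr' <| (eventually_ge_atTop (-k)).mono fun n hn => ?_
  change fourierLp 2 k = (shift n).symm (Pplus (shift n (fourierLp 2 k)))
  rw [shift_fourierLp, Pplus_fourierLp (by omega), shift_symm_fourierLp, add_sub_cancel_left]

theorem IsGSIO.eq_sum {R : L2 →L[ℂ] L2} {f g φ ψ : 𝕋 → ℂ} (hf : MemLp f ∞ μ) (hg : MemLp g ∞ μ)
    (hφ : MemLp φ ∞ μ) (hψ : MemLp ψ ∞ μ) (hR : IsGSIO R f g φ ψ) :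
    R = Pplus * Lp.mulOp hf * Pplus + Pminus * Lp.mulOp hg * Pplus
      + Pplus * Lp.mulOp hφ * Pminus + Pminus * Lp.mulOp hψ * Pminus := by
  ext1 x
  obtain ⟨h₁, h₂, h₃, h₄, hx⟩ := hR x
  rw [hx, MemLp.toLp_mul_eq_mulOp hf h₁, MemLp.toLp_mul_eq_mulOp hg h₂,
    MemLp.toLp_mul_eq_mulOp hφ h₃, MemLp.toLp_mul_eq_mulOp hψ h₄]
  rfl

def gsioGenerators : Set (L2 →L[ℂ] L2) :=
  insert Pplus {A | ∀ n, (shift n).conjStarAlgEquiv A = A}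

theorem IsGSIO.mem_adjoin_gsioGenerators {R : L2 →L[ℂ] L2} {f g φ ψ : 𝕋 → ℂ}
    (hf : MemLp f ∞ μ) (hg : MemLp g ∞ μ) (hφ : MemLp φ ∞ μ) (hψ : MemLp ψ ∞ μ)
    (hR : IsGSIO R f g φ ψ) : R ∈ StarAlgebra.adjoin ℂ gsioGenerators := by
  have hP : Pplus ∈ StarAlgebra.adjoin ℂ gsioGenerators :=
    StarAlgebra.subset_adjoin _ _ (Set.mem_insert _ _)
  have hQ : Pminus ∈ StarAlgebra.adjoin ℂ gsioGenerators := sub_mem (one_mem _) hP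
  have hM {h : 𝕋 → ℂ} (hh : MemLp h ∞ μ) : Lp.mulOp hh ∈ StarAlgebra.adjoin ℂ gsioGenerators :=
    StarAlgebra.subset_adjoin _ _ (Set.mem_insert_of_mem _ fun _ =>
      Lp.conjStarAlgEquiv_mulCircle_mulOp _ hh)
  rw [hR.eq_sum hf hg hφ hψ]
  exact add_mem (add_mem (add_mem (mul_mem (mul_mem hP (hM hf)) hP)
    (mul_mem (mul_mem hQ (hM hg)) hP)) (mul_mem (mul_mem hP (hM hφ)) hQ))
    (mul_mem (mul_mem hQ (hM hψ)) hQ)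

theorem star_gsioGenerators_subset : star gsioGenerators ⊆ gsioGenerators := by
  rintro A (hA | hA)
  · rw [← star_star A, hA]
    exact Or.inl (isSelfAdjoint_starProjection H2).star_eq
  · exact Or.inr fun n => by rw [← star_star A, map_star, hA n]

theorem gsioGenerators_subset_conjCauchySubalgebra :
    gsioGenerators ⊆ conjCauchySubalgebra shift := by
  rintro A (rfl | hA) x
  · exact (tendsto_shift_conj_Pplus x).cauchySeq
  · refine mem_conjCauchySubalgebra_of_commute shift (fun n y => ?_) x
    simpa using (DFunLike.congr_fun (hA n) (shift n y)).symm

theorem NAlg_Linf_subset_conjCauchySubalgebra :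
    (NAlg Linf : Set (L2 →L[ℂ] L2)) ⊆ conjCauchySubalgebra shift := by
  have hgen : StarAlgebra.adjoin ℂ (gsioSet Linf) ≤ StarAlgebra.adjoin ℂ gsioGenerators :=
    StarAlgebra.adjoin_le fun R ⟨_, _, _, _, hf, hg, hφ, hψ, hR⟩ =>
      hR.mem_adjoin_gsioGenerators hf hg hφ hψ
  have hadj : (StarAlgebra.adjoin ℂ gsioGenerators).toSubalgebra ≤ conjCauchySubalgebra shift := by
    rw [StarAlgebra.adjoin_toSubalgebra, Set.union_eq_left.2 star_gsioGenerators_subset]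
    exact Algebra.adjoin_le gsioGenerators_subset_conjCauchySubalgebra
  rw [NAlg, StarSubalgebra.topologicalClosure_coe]
  exact closure_minimal (fun A hA => hadj (hgen hA)) (isClosed_conjCauchySubalgebra shift)

theorem notMem_NAlg_Linf {T : L2 →L[ℂ] L2}
    (hT : ∀ n : ℤ, T (fourierLp 2 n) = fourierLp 2 (2 * n + 1)) : T ∉ NAlg Linf := by
  intro hmem
  have hconj n : (shift n).symm (T (shift n (fourierLp 2 0))) = fourierLp 2 (n + 1) := by
    rw [shift_fourierLp, add_zero, hT, shift_symm_fourierLp]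
    ring_nf
  have hcauchy := NAlg_Linf_subset_conjCauchySubalgebra hmem (fourierLp 2 0)
  simp only [hconj] at hcauchy
  exact orthonormal_fourier.not_cauchySeq_comp (add_left_injective 1) hcauchy

theorem measurePreserving_two_zsmul : MeasurePreserving (fun t : 𝕋 => (2 : ℤ) • t) μ μ :=
  Measure.measurePreserving_zsmul μ two_ne_zero

def doubling : L2 →L[ℂ] L2 :=
  (Lp.compMeasurePreservingₗᵢ ℂ _ measurePreserving_two_zsmul).toContinuousLinearMap

theorem doubling_fourierLp (k : ℤ) : doubling (fourierLp 2 k) = fourierLp 2 (2 * k) := by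
  refine Lp.ext ?_
  filter_upwards [Lp.coeFn_compMeasurePreserving (fourierLp 2 k) measurePreserving_two_zsmul,
    measurePreserving_two_zsmul.quasiMeasurePreserving.ae_eq_comp (coeFn_fourierLp 2 k),
    coeFn_fourierLp 2 (2 * k)] with t h₁ h₂ h₃
  rw [h₃]
  refine h₁.trans (h₂.trans ?_)
  simp [fourier_apply, smul_smul, mul_comm]

/-- The bounded operator on `L²(𝕋)` determined by `T zⁿ = z^{2n+1}`
(`n ∈ ℤ`) does not belong to `𝔑_{L∞}`; in particular `𝔑_{L∞}` is a proper
C*-subalgebra of `B(L²(𝕋))`. -/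
theorem nalg_proper :
    (∀ T : L2 →L[ℂ] L2,
      (∀ n : ℤ, T (fourierLp 2 n) = fourierLp 2 (2 * n + 1)) → T ∉ NAlg Linf) ∧
    NAlg Linf ≠ ⊤ := by
  refine ⟨fun T hT => notMem_NAlg_Linf hT, fun htop => ?_⟩
  have hT n : ((shift 1 : L2 →L[ℂ] L2) ∘L doubling) (fourierLp 2 n) = fourierLp 2 (2 * n + 1) := by
    change shift 1 (doubling (fourierLp 2 n)) = _
    rw [doubling_fourierLp, shift_fourierLp, add_comm]
  exact notMem_NAlg_Linf hT (htop ▸ StarSubalgebra.mem_top)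

end GSIO
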